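/- With M^λ as above (assuming I is coercive and equivalent to the squared H¹-norm), for all 0 < λ < λ₀ it holds that M^{λ₀} < M^{λ} + M^{λ₀ - λ}. -/

import Mathlib

open MeasureTheory

/-- The quadratic functional `I(u) = (1/2)∫(α u'² + β (D^{1/2}u)² + c u²)`. -/
noncomputable def Ifun (α β c : ℝ) (u : ℝ → ℝ) : ℝ :=
  (1 / 2) * (α * (∫ x : ℝ, (deriv u x) ^ 2)
    + β * (∫ ξ : ℝ, |ξ| * ‖FourierTransform.fourier (fun x : ℝ => (u x : ℂ)) ξ‖ ^ 2)
    + c * ∫ x : ℝ, (u x) ^ 2)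

/-- The cubic functional `K(u) = (1/6)∫ u³`. -/
noncomputable def Kfun (u : ℝ → ℝ) : ℝ := (1 / 6) * ∫ x : ℝ, (u x) ^ 3

/-- Membership in the even Sobolev space `H¹_e(ℝ)` (with the cube integrable). -/
def H1e (u : ℝ → ℝ) : Prop :=
  Differentiable ℝ u ∧ MemLp u 2 (volume : Measure ℝ)
    ∧ MemLp (deriv u) 2 (volume : Measure ℝ)
    ∧ Integrable (fun x : ℝ => (u x) ^ 3) ∧ ∀ x : ℝ, u (-x) = u x

/-- The constrained minimization value `M^λ = inf {I(u) : u ∈ H¹_e, K(u) = λ}`. -/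
noncomputable def Mval (α β c l : ℝ) : ℝ :=
  sInf {y : ℝ | ∃ u : ℝ → ℝ, H1e u ∧ Kfun u = l ∧ Ifun α β c u = y}

section Aux

open Real Filter Pointwise

lemma H1e_const_mul {t : ℝ} {u : ℝ → ℝ} (hu : H1e u) :
    H1e (fun x => t * u x) := by
  obtain ⟨hd, h2, hd2, h3, he⟩ := hu
  have hderiv : deriv (fun x => t * u x) = fun x => t * deriv u x := by
    funext x; rw [deriv_const_mul t (hd x)]
  refine ⟨fun x => (hd x).const_mul t, h2.const_mul t, ?_, ?_,
    fun x => by simp only []; rw [he]⟩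
  · rw [hderiv]; exact hd2.const_mul t
  · have : (fun x => (t * u x) ^ 3) = fun x => t ^ 3 * (u x) ^ 3 := by
      funext x; ring
    rw [this]; exact h3.const_mul _

lemma Kfun_const_mul (t : ℝ) (u : ℝ → ℝ) :
    Kfun (fun x => t * u x) = t ^ 3 * Kfun u := by
  unfold Kfun
  have : (fun x => (t * u x) ^ 3) = fun x => t ^ 3 * (u x) ^ 3 := by funext x; ring
  rw [this, integral_const_mul]; ring

lemma Ifun_const_mul (α β c t : ℝ) {u : ℝ → ℝ} (hd : Differentiable ℝ u) :
    Ifun α β c (fun x => t * u x) = t ^ 2 * Ifun α β c u := by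
  unfold Ifun
  have h1 : (fun x => deriv (fun y => t * u y) x ^ 2)
      = fun x => t ^ 2 * (deriv u x) ^ 2 := by
    funext x; rw [deriv_const_mul t (hd x)]; ring
  have h2 : (fun x : ℝ => ((t * u x : ℝ) : ℂ)) = (t : ℂ) • (fun x : ℝ => (u x : ℂ)) := by
    funext x; push_cast; simp [smul_eq_mul]
  have h3 : ∀ ξ : ℝ, ‖FourierTransform.fourier (fun x : ℝ => ((t * u x : ℝ) : ℂ)) ξ‖ ^ 2
      = t ^ 2 * ‖FourierTransform.fourier (fun x : ℝ => (u x : ℂ)) ξ‖ ^ 2 := by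
    intro ξ
    rw [h2]
    have : FourierTransform.fourier ((t : ℂ) • fun x : ℝ => (u x : ℂ))
        = (t : ℂ) • FourierTransform.fourier (fun x : ℝ => (u x : ℂ)) :=
      VectorFourier.fourierIntegral_const_smul _ _ _ _ _
    rw [this]
    simp [norm_smul, mul_pow, Complex.norm_real, sq_abs]
  have h4 : (fun x => (t * u x) ^ 2) = fun x => t ^ 2 * (u x) ^ 2 := by funext x; ring
  simp only [h1, h4]
  simp only [h3]
  have h5 : (fun ξ : ℝ => |ξ| * (t ^ 2 * ‖FourierTransform.fourier (fun x : ℝ => (u x : ℂ)) ξ‖ ^ 2))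
      = fun ξ : ℝ => t ^ 2 * (|ξ| * ‖FourierTransform.fourier (fun x : ℝ => (u x : ℂ)) ξ‖ ^ 2) := by
    funext ξ; ring
  rw [h5, integral_const_mul, integral_const_mul, integral_const_mul]
  ring

lemma Mval_scale (α β c : ℝ) {t : ℝ} (ht : 0 < t) (l : ℝ) :
    Mval α β c (t ^ 3 * l) = t ^ 2 * Mval α β c l := by
  unfold Mval
  have key : {y : ℝ | ∃ u, H1e u ∧ Kfun u = t ^ 3 * l ∧ Ifun α β c u = y}
      = (t ^ 2) • {y : ℝ | ∃ u, H1e u ∧ Kfun u = l ∧ Ifun α β c u = y} := by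
    ext y
    constructor
    · rintro ⟨u, hu, hK, hI⟩
      refine ⟨Ifun α β c (fun x => t⁻¹ * u x),
        ⟨fun x => t⁻¹ * u x, H1e_const_mul hu, ?_, rfl⟩, ?_⟩
      · rw [Kfun_const_mul, hK]; field_simp
      · rw [Ifun_const_mul α β c t⁻¹ hu.1, ← hI]; simp only [smul_eq_mul]
        field_simp
    · rintro ⟨y', ⟨u, hu, hK, hI⟩, rfl⟩
      refine ⟨fun x => t * u x, H1e_const_mul hu, ?_, ?_⟩
      · rw [Kfun_const_mul, hK]
      · rw [Ifun_const_mul α β c t hu.1, hI]; simp only [smul_eq_mul]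
  rw [key, Real.sInf_smul_of_nonneg (by positivity), smul_eq_mul]

noncomputable def gauss : ℝ → ℝ := fun x => Real.exp (-x ^ 2)

lemma gauss_sq : (fun x : ℝ => gauss x ^ 2) = fun x : ℝ => Real.exp (-2 * x ^ 2) := by
  funext x
  rw [gauss, ← Real.exp_nat_mul]
  norm_num

lemma gauss_cube : (fun x : ℝ => gauss x ^ 3) = fun x : ℝ => Real.exp (-3 * x ^ 2) := by
  funext x
  rw [gauss, ← Real.exp_nat_mul]
  norm_num

lemma gauss_diff : Differentiable ℝ gauss :=
  Real.differentiable_exp.comp ((differentiable_pow 2).neg)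

lemma gauss_hasDeriv (x : ℝ) : HasDerivAt gauss (Real.exp (-x ^ 2) * (-(2 * x))) x := by
  have h1 : HasDerivAt (fun y : ℝ => -y ^ 2) (-(2 * x)) x := by
    simpa using ((hasDerivAt_pow 2 x).fun_neg)
  exact (Real.hasDerivAt_exp (-x ^ 2)).comp x h1

lemma gauss_deriv : deriv gauss = fun x => Real.exp (-x ^ 2) * (-(2 * x)) := by
  funext x; exact (gauss_hasDeriv x).deriv

lemma gauss_H1e : H1e gauss := by
  refine ⟨gauss_diff, ?_, ?_, ?_, ?_⟩
  · rw [memLp_two_iff_integrable_sq gauss_diff.continuous.aestronglyMeasurable, gauss_sq]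
    exact integrable_exp_neg_mul_sq (by norm_num)
  · rw [gauss_deriv]
    rw [memLp_two_iff_integrable_sq]
    · have : (fun x : ℝ => (Real.exp (-x ^ 2) * (-(2 * x))) ^ 2)
          = fun x : ℝ => 4 * (x ^ ((2 : ℕ) : ℝ) * Real.exp (-2 * x ^ 2)) := by
        funext x
        rw [Real.rpow_natCast, show (-2 * x ^ 2 : ℝ) = -x ^ 2 + -x ^ 2 by ring,
          Real.exp_add]
        ring
      rw [this]
      exact (integrable_rpow_mul_exp_neg_mul_sq (by norm_num) (by norm_num)).const_mul 4
    · exact (gauss_diff.continuous.mul (by continuity)).aestronglyMeasurable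
  · rw [gauss_cube]; exact integrable_exp_neg_mul_sq (by norm_num)
  · intro x; simp [gauss, neg_sq]

lemma gauss_K_pos : 0 < Kfun gauss := by
  rw [Kfun, gauss_cube, integral_gaussian]
  positivity

lemma exists_K {l : ℝ} (hl : 0 < l) : ∃ u : ℝ → ℝ, H1e u ∧ Kfun u = l := by
  have hkpos := gauss_K_pos
  set t := (l / Kfun gauss) ^ ((1 : ℝ) / 3) with htd
  have ht3 : t ^ 3 = l / Kfun gauss := by
    rw [htd, ← Real.rpow_natCast ((l / Kfun gauss) ^ ((1 : ℝ) / 3)) 3,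
      ← Real.rpow_mul (div_pos hl hkpos).le]
    norm_num
  refine ⟨fun x => t * gauss x, H1e_const_mul gauss_H1e, ?_⟩
  rw [Kfun_const_mul, ht3]
  field_simp

lemma sq_le_of_H1e {u : ℝ → ℝ} (hu : H1e u) (x : ℝ) :
    u x ^ 2 ≤ 2 * (∫ y : ℝ, u y ^ 2) + ∫ y : ℝ, deriv u y ^ 2 := by
  obtain ⟨hd, h2, hd2, _, _⟩ := hu
  have hcont : Continuous u := hd.continuous
  have hA : Integrable (fun y : ℝ => u y ^ 2) := h2.integrable_sq
  have hB : Integrable (fun y : ℝ => deriv u y ^ 2) := hd2.integrable_sq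
  set g : ℝ → ℝ := fun y => 2 * u y * deriv u y with hgdef
  have hgmeas : AEStronglyMeasurable g volume :=
    ((hcont.measurable.const_mul 2).mul (measurable_deriv u)).aestronglyMeasurable
  have hgbound : ∀ y, |g y| ≤ u y ^ 2 + deriv u y ^ 2 := by
    intro y
    rw [hgdef, abs_mul, abs_mul, abs_two]
    nlinarith [sq_nonneg (|u y| - |deriv u y|), abs_nonneg (u y),
      abs_nonneg (deriv u y), sq_abs (u y), sq_abs (deriv u y)]
  have hg : Integrable g := (hA.add hB).mono' hgmeas
    (Eventually.of_forall (fun y => by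
      simpa [Real.norm_eq_abs] using hgbound y))
  obtain ⟨t₀, ht₀mem, ht₀min⟩ := isCompact_Icc.exists_isMinOn
    (Set.nonempty_Icc.2 (by linarith : x - 1 ≤ x)) ((hcont.pow 2).continuousOn)
  have hIcc : ∫ y in Set.Icc (x - 1) x, u y ^ 2 ≤ ∫ y : ℝ, u y ^ 2 :=
    setIntegral_le_integral hA (Eventually.of_forall fun y => sq_nonneg _)
  have hvol : (volume (Set.Icc (x - 1) x)).toReal = 1 := by
    rw [Real.volume_Icc]
    norm_num
  have ht₀le : u t₀ ^ 2 ≤ ∫ y : ℝ, u y ^ 2 := by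
    have h := setIntegral_ge_of_const_le measurableSet_Icc
      (by rw [Real.volume_Icc]; exact ENNReal.ofReal_ne_top)
      (fun y hy => ht₀min hy) hA.integrableOn
    rw [measureReal_def, hvol, one_smul] at h
    exact h.trans hIcc
  have ht₀x : t₀ ≤ x := ht₀mem.2
  have hderiv2 : ∀ y ∈ Set.uIcc t₀ x, HasDerivAt (fun z => u z ^ 2) (g y) y := by
    intro y _
    have h := ((hd y).hasDerivAt).pow 2
    refine h.congr_deriv ?_
    rw [hgdef]
    push_cast
    ring
  have hftc : ∫ y in t₀..x, g y = u x ^ 2 - u t₀ ^ 2 :=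
    intervalIntegral.integral_eq_sub_of_hasDerivAt hderiv2 hg.intervalIntegrable
  have h1 : ∫ y in t₀..x, g y ≤ ∫ y : ℝ, |g y| := by
    calc ∫ y in t₀..x, g y ≤ |∫ y in t₀..x, g y| := le_abs_self _
    _ ≤ ∫ y in t₀..x, |g y| := intervalIntegral.abs_integral_le_integral_abs ht₀x
    _ = ∫ y in Set.Ioc t₀ x, |g y| := intervalIntegral.integral_of_le ht₀x
    _ ≤ ∫ y : ℝ, |g y| := setIntegral_le_integral hg.abs
        (Eventually.of_forall fun y => abs_nonneg _)
  have h2 : ∫ y : ℝ, |g y| ≤ (∫ y : ℝ, u y ^ 2) + ∫ y : ℝ, deriv u y ^ 2 := by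
    calc ∫ y : ℝ, |g y| ≤ ∫ y : ℝ, (u y ^ 2 + deriv u y ^ 2) :=
      integral_mono hg.abs (hA.add hB) hgbound
    _ = _ := integral_add hA hB
  linarith

lemma H1e_norm_ge {u : ℝ → ℝ} (hu : H1e u) (hK : Kfun u = 1) :
    2 ≤ (∫ y : ℝ, u y ^ 2) + ∫ y : ℝ, deriv u y ^ 2 := by
  set A := ∫ y : ℝ, u y ^ 2 with hAdef
  set B := ∫ y : ℝ, deriv u y ^ 2 with hBdef
  have hA0 : 0 ≤ A := integral_nonneg fun y => sq_nonneg _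
  have hB0 : 0 ≤ B := integral_nonneg fun y => sq_nonneg _
  set N := A + B with hNdef
  have hN0 : 0 ≤ N := by positivity
  have hsup : ∀ y, u y ^ 2 ≤ 2 * N := by
    intro y
    have := sq_le_of_H1e hu y
    rw [← hAdef, ← hBdef] at this
    nlinarith
  have hs0 : 0 ≤ Real.sqrt (2 * N) := Real.sqrt_nonneg _
  have habs : ∀ y, |u y| ≤ Real.sqrt (2 * N) := by
    intro y
    rw [← Real.sqrt_sq_eq_abs]
    exact Real.sqrt_le_sqrt (hsup y)
  have hcube : ∀ y, u y ^ 3 ≤ Real.sqrt (2 * N) * u y ^ 2 := by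
    intro y
    calc u y ^ 3 ≤ |u y ^ 3| := le_abs_self _
    _ = |u y| * |u y| ^ 2 := by rw [abs_pow]; ring
    _ = |u y| * u y ^ 2 := by rw [sq_abs]
    _ ≤ Real.sqrt (2 * N) * u y ^ 2 := mul_le_mul_of_nonneg_right (habs y) (sq_nonneg _)
  have hAint : Integrable (fun y : ℝ => u y ^ 2) := hu.2.1.integrable_sq
  have h6 : (6 : ℝ) = ∫ y : ℝ, u y ^ 3 := by
    rw [Kfun] at hK; linarith
  have hint : (6 : ℝ) ≤ Real.sqrt (2 * N) * A := by
    rw [h6]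
    calc ∫ y : ℝ, u y ^ 3 ≤ ∫ y : ℝ, Real.sqrt (2 * N) * u y ^ 2 :=
      integral_mono hu.2.2.2.1 (hAint.const_mul _) hcube
    _ = Real.sqrt (2 * N) * A := by rw [integral_const_mul]
  have h6N : (6 : ℝ) ≤ Real.sqrt (2 * N) * N :=
    hint.trans (mul_le_mul_of_nonneg_left (by linarith) hs0)
  have hsq : Real.sqrt (2 * N) ^ 2 = 2 * N := Real.sq_sqrt (by positivity)
  have h36 : 36 ≤ 2 * N * N ^ 2 := by nlinarith [h6N, hsq]
  nlinarith [h36, hN0, sq_nonneg (N - 2), sq_nonneg (N + 2), sq_nonneg N]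

end Aux

/-- Strict subadditivity of the constrained minimization value:
for `0 < λ < λ₀`, `M^{λ₀} < M^{λ} + M^{λ₀-λ}` (assuming `I` is equivalent to
the squared `H¹` norm). -/
theorem stmt5 (α β c : ℝ)
    (hequiv : ∃ C₁ C₂ : ℝ, 0 < C₁ ∧ 0 < C₂ ∧ ∀ u : ℝ → ℝ, H1e u →
      C₁ * ((∫ x : ℝ, (u x) ^ 2) + ∫ x : ℝ, (deriv u x) ^ 2) ≤ Ifun α β c u ∧
      Ifun α β c u ≤ C₂ * ((∫ x : ℝ, (u x) ^ 2) + ∫ x : ℝ, (deriv u x) ^ 2))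
    (l l₀ : ℝ) (hl : 0 < l) (hll₀ : l < l₀) :
    Mval α β c l₀ < Mval α β c l + Mval α β c (l₀ - l) := by
  obtain ⟨C₁, C₂, hC₁, hC₂, hbound⟩ := hequiv
  set M := Mval α β c 1 with hM
  have hnonempty : {y : ℝ | ∃ u, H1e u ∧ Kfun u = 1 ∧ Ifun α β c u = y}.Nonempty := by
    obtain ⟨u, hu, hK⟩ := exists_K one_pos
    exact ⟨Ifun α β c u, u, hu, hK, rfl⟩
  have hMge : 2 * C₁ ≤ M := by
    rw [hM, Mval]
    apply le_csInf hnonempty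
    rintro y ⟨u, hu, hK, rfl⟩
    have h1 := (hbound u hu).1
    have h2 := H1e_norm_ge hu hK
    nlinarith
  have hMpos : 0 < M := lt_of_lt_of_le (by positivity) hMge
  have hscale : ∀ l' : ℝ, 0 < l' → Mval α β c l' = (l' ^ ((1 : ℝ) / 3)) ^ 2 * M := by
    intro l' hl'
    have ht : 0 < l' ^ ((1 : ℝ) / 3) := Real.rpow_pos_of_pos hl' _
    have h3 : (l' ^ ((1 : ℝ) / 3)) ^ 3 = l' := by
      rw [← Real.rpow_natCast (l' ^ ((1 : ℝ) / 3)) 3, ← Real.rpow_mul hl'.le]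
      norm_num
    have h := Mval_scale α β c ht 1
    rw [mul_one, h3] at h
    rw [h, hM]
  have hb : 0 < l₀ - l := by linarith
  have hl₀ : 0 < l₀ := hl.trans hll₀
  set a := l ^ ((1 : ℝ) / 3) with hadef
  set b := (l₀ - l) ^ ((1 : ℝ) / 3) with hbdef
  set d := l₀ ^ ((1 : ℝ) / 3) with hddef
  have ha : 0 < a := Real.rpow_pos_of_pos hl _
  have hbb : 0 < b := Real.rpow_pos_of_pos hb _
  have hdd : 0 < d := Real.rpow_pos_of_pos hl₀ _
  have hcube : ∀ x : ℝ, 0 < x → (x ^ ((1 : ℝ) / 3)) ^ 3 = x := by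
    intro x hx
    rw [← Real.rpow_natCast (x ^ ((1 : ℝ) / 3)) 3, ← Real.rpow_mul hx.le]
    norm_num
  have ha3 : a ^ 3 = l := hcube l hl
  have hb3 : b ^ 3 = l₀ - l := hcube _ hb
  have hd3 : d ^ 3 = l₀ := hcube _ hl₀
  have hda : a < d := by
    apply lt_of_pow_lt_pow_left₀ 3 hdd.le
    rw [ha3, hd3]; linarith
  have hdb : b < d := by
    apply lt_of_pow_lt_pow_left₀ 3 hdd.le
    rw [hb3, hd3]; linarith
  have hkey : d ^ 2 < a ^ 2 + b ^ 2 := by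
    have e1 : a ^ 2 * a < a ^ 2 * d := mul_lt_mul_of_pos_left hda (pow_pos ha 2)
    have e2 : b ^ 2 * b < b ^ 2 * d := mul_lt_mul_of_pos_left hdb (pow_pos hbb 2)
    have e3 : d ^ 2 * d < (a ^ 2 + b ^ 2) * d := by nlinarith
    exact lt_of_mul_lt_mul_right e3 hdd.le
  rw [hscale l₀ hl₀, hscale l hl, hscale (l₀ - l) hb]
  nlinarith [mul_pos (sub_pos.2 hkey) hMpos]
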